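/- arXiv:1210.6317 — 3 statements merged into one kernel-verified Lean document; each statement's English description precedes it below -/
import Mathlib

section
/- For every radius r ≥ 0 and any two distinct voxels v_a, v_b ∈ ℤ^d, there exists a voxel v ∈ ℤ^d whose searchlight S_r(v) contains v_a but not v_b, and there exists a voxel v' ∈ ℤ^d whose searchlight S_r(v') contains v_b but not v_a. (Paper's Lemma 2.) -/
/-- Euclidean distance between voxels in the integer lattice `ℤ^d`. -/
noncomputable def vdist {d : ℕ} (v w : Fin d → ℤ) : ℝ :=
  Real.sqrt (∑ i, ((v i : ℝ) - (w i : ℝ)) ^ 2)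

/-- The searchlight of radius `r` centered at voxel `v`. -/
def searchlight {d : ℕ} (r : ℝ) (v : Fin d → ℤ) : Set (Fin d → ℤ) :=
  {w | vdist w v ≤ r}

lemma exists_sep_one {d : ℕ} (r : ℝ) (hr : 0 ≤ r) (va vb : Fin d → ℤ)
    (hne : va ≠ vb) :
    ∃ v : Fin d → ℤ, va ∈ searchlight r v ∧ vb ∉ searchlight r v := by
  set S : ℝ := ∑ i, ((va i : ℝ) - (vb i : ℝ)) ^ 2 with hSdef
  have hS : 0 < S := by
    obtain ⟨i, hi⟩ := Function.ne_iff.mp hne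
    have hi' : (0:ℝ) < ((va i : ℝ) - (vb i : ℝ)) ^ 2 := by
      have h2 : (va i : ℝ) ≠ (vb i : ℝ) := by exact_mod_cast hi
      exact pow_two_pos_of_ne_zero (sub_ne_zero.mpr h2)
    exact lt_of_lt_of_le hi' (Finset.single_le_sum
      (f := fun j => ((va j : ℝ) - (vb j : ℝ)) ^ 2)
      (fun j _ => by positivity) (Finset.mem_univ i))
  set D : ℝ := Real.sqrt S with hDdef
  have hD : 0 < D := Real.sqrt_pos.mpr hS
  set k : ℕ := ⌊r / D⌋₊ with hk
  refine ⟨fun i => va i + k * (va i - vb i), ?_, ?_⟩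
  · show vdist va _ ≤ r
    have : vdist va (fun i => va i + k * (va i - vb i)) = k * D := by
      unfold vdist
      have : ∑ i, ((va i : ℝ) - ((va i + k * (va i - vb i) : ℤ) : ℝ)) ^ 2
          = (k:ℝ)^2 * S := by
        rw [hSdef, Finset.mul_sum]
        refine Finset.sum_congr rfl fun i _ => ?_
        push_cast; ring
      rw [this, Real.sqrt_mul (by positivity), Real.sqrt_sq (by positivity), hDdef]
    rw [this]
    have h1 : (k:ℝ) ≤ r / D := Nat.floor_le (by positivity)
    calc (k:ℝ) * D ≤ (r / D) * D := by nlinarith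
      _ = r := div_mul_cancel₀ r hD.ne'
  · show ¬ vdist vb _ ≤ r
    have heq : vdist vb (fun i => va i + k * (va i - vb i)) = ((k:ℝ)+1) * D := by
      unfold vdist
      have : ∑ i, ((vb i : ℝ) - ((va i + k * (va i - vb i) : ℤ) : ℝ)) ^ 2
          = ((k:ℝ)+1)^2 * S := by
        rw [hSdef, Finset.mul_sum]
        refine Finset.sum_congr rfl fun i _ => ?_
        push_cast; ring
      rw [this, Real.sqrt_mul (by positivity), Real.sqrt_sq (by positivity), hDdef]
    rw [heq, not_le]
    have h2 : r / D < (k:ℝ) + 1 := Nat.lt_floor_add_one (r / D)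
    have : r = (r / D) * D := (div_mul_cancel₀ r hD.ne').symm
    nlinarith

/-- Lemma 2: for any two distinct voxels there is a searchlight containing one
but not the other, and vice versa. -/
theorem exists_separating_searchlights (d : ℕ) (hd : 1 ≤ d) (r : ℝ) (hr : 0 ≤ r)
    (va vb : Fin d → ℤ) (hne : va ≠ vb) :
    (∃ v : Fin d → ℤ, va ∈ searchlight r v ∧ vb ∉ searchlight r v) ∧
      (∃ v' : Fin d → ℤ, vb ∈ searchlight r v' ∧ va ∉ searchlight r v') := by
  exact ⟨exists_sep_one r hr va vb hne, exists_sep_one r hr vb va hne.symm⟩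
end

section
/- Let r ≥ 0 and let G ⊆ ℤ^d be a set of voxels containing at least two elements. Then the number of searchlights of radius r that contain G is strictly less than N_r: the cardinality of {w ∈ ℤ^d : G ⊆ S_r(w)} is strictly less than the cardinality of S_r(v), for every voxel v ∈ ℤ^d. (Paper's Theorem 2.) -/
lemma vdist_comm {d : ℕ} (v w : Fin d → ℤ) : vdist v w = vdist w v := by
  unfold vdist
  congr 1
  exact Finset.sum_congr rfl (fun i _ => by ring)

lemma vdist_pos {d : ℕ} {v w : Fin d → ℤ} (h : v ≠ w) : 0 < vdist v w := by
  unfold vdist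
  apply Real.sqrt_pos.mpr
  obtain ⟨i, hi⟩ := Function.ne_iff.mp h
  apply Finset.sum_pos' (fun j _ => sq_nonneg _)
  refine ⟨i, Finset.mem_univ i, ?_⟩
  have : ((v i : ℝ) - w i) ≠ 0 := by
    intro h0
    apply hi
    have : (v i : ℝ) = w i := by linarith
    exact_mod_cast this
  positivity

lemma searchlight_finite {d : ℕ} (r : ℝ) (v : Fin d → ℤ) :
    (searchlight r v).Finite := by
  apply Set.Finite.subset (Set.Finite.pi (fun i =>
    Set.finite_Icc (v i - ⌈r⌉) (v i + ⌈r⌉)))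
  intro w hw
  have hw' : Real.sqrt (∑ i, ((w i : ℝ) - v i) ^ 2) ≤ r := hw
  have hr0 : (0:ℝ) ≤ r := le_trans (Real.sqrt_nonneg _) hw'
  have hsum : (∑ i, ((w i : ℝ) - v i) ^ 2) ≤ r ^ 2 := by
    have hnn : (0:ℝ) ≤ ∑ i, ((w i : ℝ) - v i) ^ 2 :=
      Finset.sum_nonneg fun i _ => sq_nonneg _
    have := Real.sq_sqrt hnn
    nlinarith [Real.sqrt_nonneg (∑ i, ((w i : ℝ) - v i) ^ 2)]
  intro i _
  have hterm : ((w i : ℝ) - v i) ^ 2 ≤ r ^ 2 :=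
    le_trans (Finset.single_le_sum (f := fun j => ((w j : ℝ) - v j) ^ 2)
      (fun j _ => sq_nonneg _) (Finset.mem_univ i)) hsum
  have hceil : r ≤ (⌈r⌉ : ℝ) := Int.le_ceil r
  have h1 : -(⌈r⌉ : ℝ) ≤ (w i : ℝ) - v i := by nlinarith
  have h2 : (w i : ℝ) - v i ≤ (⌈r⌉ : ℝ) := by nlinarith
  constructor
  · have : (v i : ℝ) - ⌈r⌉ ≤ w i := by linarith
    exact_mod_cast this
  · have : (w i : ℝ) ≤ v i + ⌈r⌉ := by linarith
    exact_mod_cast this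

lemma searchlight_translate {d : ℕ} (r : ℝ) (a v : Fin d → ℤ) :
    searchlight r v = (fun w i => w i + (v i - a i)) '' searchlight r a := by
  ext w
  constructor
  · intro hw
    refine ⟨fun i => w i - (v i - a i), ?_, by funext i; ring⟩
    show Real.sqrt _ ≤ r
    have hw' : Real.sqrt (∑ i, ((w i : ℝ) - v i) ^ 2) ≤ r := hw
    convert hw' using 3
    push_cast; ring
  · rintro ⟨u, hu, rfl⟩
    show Real.sqrt _ ≤ r
    have hu' : Real.sqrt (∑ i, ((u i : ℝ) - a i) ^ 2) ≤ r := hu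
    convert hu' using 3
    push_cast; ring

lemma ncard_searchlight_eq {d : ℕ} (r : ℝ) (a v : Fin d → ℤ) :
    (searchlight r v).ncard = (searchlight r a).ncard := by
  rw [searchlight_translate r a v]
  apply Set.ncard_image_of_injective
  intro x y hxy
  funext i
  have := congrFun hxy i
  simpa using this

/-- Theorem 2: a group of at least two voxels is contained in strictly fewer
than `N_r` searchlights. -/
theorem multivoxel_group_fewer_searchlights (d : ℕ) (hd : 1 ≤ d) (r : ℝ)
    (hr : 0 ≤ r) (G : Set (Fin d → ℤ))
    (hG : ∃ a ∈ G, ∃ b ∈ G, a ≠ b) (v : Fin d → ℤ) :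
    {w : Fin d → ℤ | G ⊆ searchlight r w}.ncard < (searchlight r v).ncard := by
  obtain ⟨a, ha, b, hb, hab⟩ := hG
  set D := vdist a b with hD
  have hDpos : 0 < D := vdist_pos hab
  set n : ℕ := ⌊r / D⌋₊ with hn
  have hnD : (n : ℝ) * D ≤ r := by
    have := Nat.floor_le (div_nonneg hr hDpos.le)
    calc (n : ℝ) * D ≤ (r / D) * D := by
          apply mul_le_mul_of_nonneg_right _ hDpos.le
          exact this
      _ = r := by field_simp
  have hn1D : r < ((n : ℝ) + 1) * D := by
    have := Nat.lt_succ_floor (r / D)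
    have h2 : r / D < (n : ℝ) + 1 := by exact_mod_cast this
    calc r = (r / D) * D := by field_simp
      _ < ((n : ℝ) + 1) * D := by
          apply mul_lt_mul_of_pos_right h2 hDpos
  set u : Fin d → ℤ := fun i => a i + n * (a i - b i) with hu
  set S : ℝ := ∑ i, ((a i : ℝ) - b i) ^ 2 with hS
  have hSnn : 0 ≤ S := Finset.sum_nonneg fun i _ => sq_nonneg _
  have hDS : D = Real.sqrt S := rfl
  have hua : vdist u a = (n : ℝ) * D := by
    unfold vdist
    have : ∀ i : Fin d, ((u i : ℝ) - a i) ^ 2 = (n : ℝ) ^ 2 * ((a i : ℝ) - b i) ^ 2 := by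
      intro i
      simp only [hu]
      push_cast
      ring
    rw [Finset.sum_congr rfl (fun i _ => this i), ← Finset.mul_sum, ← hS, hDS,
      Real.sqrt_mul (sq_nonneg _), Real.sqrt_sq (by positivity : (0:ℝ) ≤ (n:ℝ))]
  have hub : vdist u b = ((n : ℝ) + 1) * D := by
    unfold vdist
    have : ∀ i : Fin d, ((u i : ℝ) - b i) ^ 2 = ((n : ℝ) + 1) ^ 2 * ((a i : ℝ) - b i) ^ 2 := by
      intro i
      simp only [hu]
      push_cast
      ring
    rw [Finset.sum_congr rfl (fun i _ => this i), ← Finset.mul_sum, ← hS, hDS,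
      Real.sqrt_mul (sq_nonneg _), Real.sqrt_sq (by positivity : (0:ℝ) ≤ (n:ℝ) + 1)]
  have huS : u ∈ searchlight r a := by
    show vdist u a ≤ r
    rw [hua]; exact hnD
  have hsub : {w : Fin d → ℤ | G ⊆ searchlight r w} ⊆ searchlight r a \ {u} := by
    intro w hw
    constructor
    · show vdist w a ≤ r
      rw [vdist_comm]
      exact hw ha
    · intro hwu
      simp only [Set.mem_singleton_iff] at hwu
      have hbw : vdist b w ≤ r := hw hb
      rw [hwu, vdist_comm, hub] at hbw
      linarith
  have hfin := searchlight_finite r a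
  calc {w : Fin d → ℤ | G ⊆ searchlight r w}.ncard
      ≤ (searchlight r a \ {u}).ncard :=
        Set.ncard_le_ncard hsub (hfin.subset Set.diff_subset)
    _ < (searchlight r a).ncard := by
        apply Set.ncard_lt_ncard _ hfin
        constructor
        · exact Set.diff_subset
        · intro hcon
          exact (hcon huS).2 rfl
    _ = (searchlight r v).ncard := ncard_searchlight_eq r v a
end

section
/- Let 0 ≤ r_a and r_a + 1 ≤ r_b, and let G ⊆ ℤ^d be a nonempty set of voxels that is contained in at least one searchlight of radius r_a (i.e. there exists v₀ ∈ ℤ^d with G ⊆ S_{r_a}(v₀)). Then the sets K_{r_a} = {w ∈ ℤ^d : G ⊆ S_{r_a}(w)} and K_{r_b} = {w ∈ ℤ^d : G ⊆ S_{r_b}(w)} are finite, K_{r_a} ⊆ K_{r_b}, and the cardinality of K_{r_b} is strictly greater than the cardinality of K_{r_a}: G is contained in strictly more searchlights of radius r_b than searchlights of radius r_a. (Paper's Theorem 3.) -/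
/-! A finite nonempty set of centres has a centre `w` whose first coordinate is maximal among them. Shifting `w`
by one unit along that axis moves it by distance `1`, so by the triangle inequality the shifted voxel
is a centre of radius `r_a + 1 ≤ r_b`, while maximality keeps it out of the radius-`r_a` centres.
Finiteness holds because every centre lies within sup-distance `r` of any voxel of `G`, and balls
of the discrete proper space `Fin d → ℤ` are finite. -/

namespace Voxel

variable {d : ℕ}

noncomputable def toEuclidean (v : Fin d → ℤ) : EuclideanSpace ℝ (Fin d) :=
  WithLp.toLp 2 fun i => (v i : ℝ)

lemma vdist_eq_dist (v w : Fin d → ℤ) : vdist v w = dist (toEuclidean v) (toEuclidean w) := by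
  simp [vdist, toEuclidean, EuclideanSpace.dist_eq, Real.dist_eq, sq_abs]

lemma vdist_nonneg (v w : Fin d → ℤ) : 0 ≤ vdist v w := Real.sqrt_nonneg _

lemma vdist_triangle (u v w : Fin d → ℤ) : vdist u w ≤ vdist u v + vdist v w := by
  simp only [vdist_eq_dist]
  exact dist_triangle _ _ _

/-- The left-hand side is the sup distance of `Fin d → ℤ`. -/
lemma dist_le_vdist (v w : Fin d → ℤ) : dist v w ≤ vdist v w := by
  refine (dist_pi_le_iff (vdist_nonneg v w)).2 fun i => ?_
  rw [← Int.dist_cast_real, vdist_eq_dist]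
  exact PiLp.dist_apply_le (toEuclidean v) (toEuclidean w) i

lemma finite_setOf_vdist_le (v : Fin d → ℤ) (r : ℝ) : {w | vdist v w ≤ r}.Finite :=
  (isCompact_closedBall v r).finite_of_discrete.subset fun w hw =>
    Metric.mem_closedBall.2 <| dist_comm v w ▸ (dist_le_vdist v w).trans hw

lemma vdist_update_add_one (w : Fin d → ℤ) (i : Fin d) :
    vdist w (Function.update w i (w i + 1)) = 1 := by
  unfold vdist
  rw [Finset.sum_eq_single i (fun j _ hj => by simp [Function.update_of_ne hj]) (by simp)]
  simp

section Centers

variable (G : Set (Fin d → ℤ))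

def centers (r : ℝ) : Set (Fin d → ℤ) := {w | G ⊆ searchlight r w}

variable {G}

lemma centers_finite (hG : G.Nonempty) (r : ℝ) : (centers G r).Finite := by
  obtain ⟨g, hg⟩ := hG
  exact (finite_setOf_vdist_le g r).subset fun w hw => hw hg

lemma centers_mono {r s : ℝ} (h : r ≤ s) : centers G r ⊆ centers G s :=
  fun _ hw _ hg => (hw hg).trans h

lemma update_add_one_mem_centers {r : ℝ} {w : Fin d → ℤ} (hw : w ∈ centers G r) (i : Fin d) :
    Function.update w i (w i + 1) ∈ centers G (r + 1) := by
  intro g hg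
  have hgw : vdist g w ≤ r := hw hg
  calc vdist g (Function.update w i (w i + 1))
      ≤ vdist g w + vdist w (Function.update w i (w i + 1)) := vdist_triangle _ _ _
    _ ≤ r + 1 := by rw [vdist_update_add_one]; linarith

lemma exists_mem_centers_add_one_notMem {r : ℝ} (hfin : (centers G r).Finite)
    (hne : (centers G r).Nonempty) (i : Fin d) :
    ∃ w ∈ centers G (r + 1), w ∉ centers G r := by
  obtain ⟨w, hw, hmax⟩ := hfin.exists_maximalFor (fun w => w i) _ hne
  refine ⟨_, update_add_one_mem_centers hw i, fun hmem => ?_⟩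
  have := hmax (j := Function.update w i (w i + 1)) hmem (by simp)
  simp at this

lemma ncard_centers_lt {r s : ℝ} (hG : G.Nonempty) (hne : (centers G r).Nonempty)
    (hrs : r + 1 ≤ s) (i : Fin d) : (centers G r).ncard < (centers G s).ncard := by
  obtain ⟨w, hw, hw'⟩ := exists_mem_centers_add_one_notMem (centers_finite hG r) hne i
  refine Set.ncard_lt_ncard ?_ (centers_finite hG s)
  exact (Set.ssubset_iff_of_subset (centers_mono (by linarith))).2
    ⟨w, centers_mono hrs hw, hw'⟩

end Centers

end Voxel

theorem group_in_more_larger_searchlights_general (d : ℕ) (hd : 1 ≤ d)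
    (ra rb : ℝ) (hrb : ra + 1 ≤ rb)
    (G : Set (Fin d → ℤ)) (hGne : G.Nonempty)
    (v₀ : Fin d → ℤ) (hGv₀ : G ⊆ searchlight ra v₀) :
    {w : Fin d → ℤ | G ⊆ searchlight ra w}.Finite ∧
    {w : Fin d → ℤ | G ⊆ searchlight rb w}.Finite ∧
    {w : Fin d → ℤ | G ⊆ searchlight ra w} ⊆
      {w : Fin d → ℤ | G ⊆ searchlight rb w} ∧
    {w : Fin d → ℤ | G ⊆ searchlight ra w}.ncard <
      {w : Fin d → ℤ | G ⊆ searchlight rb w}.ncard :=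
  ⟨Voxel.centers_finite hGne ra, Voxel.centers_finite hGne rb, Voxel.centers_mono (by linarith),
    Voxel.ncard_centers_lt hGne ⟨v₀, hGv₀⟩ hrb ⟨0, hd⟩⟩

/-- Theorem 3: a nonempty voxel group contained in some searchlight of radius
`r_a` is contained in strictly more searchlights of radius `r_b` than of
radius `r_a`. -/
theorem group_in_more_larger_searchlights (d : ℕ) (hd : 1 ≤ d)
    (ra rb : ℝ) (hra : 0 ≤ ra) (hrb : ra + 1 ≤ rb)
    (G : Set (Fin d → ℤ)) (hGne : G.Nonempty)
    (v₀ : Fin d → ℤ) (hGv₀ : G ⊆ searchlight ra v₀) :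
    {w : Fin d → ℤ | G ⊆ searchlight ra w}.Finite ∧
    {w : Fin d → ℤ | G ⊆ searchlight rb w}.Finite ∧
    {w : Fin d → ℤ | G ⊆ searchlight ra w} ⊆
      {w : Fin d → ℤ | G ⊆ searchlight rb w} ∧
    {w : Fin d → ℤ | G ⊆ searchlight ra w}.ncard <
      {w : Fin d → ℤ | G ⊆ searchlight rb w}.ncard :=
  group_in_more_larger_searchlights_general d hd ra rb hrb G hGne v₀ hGv₀
end
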